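/- For n ≥ 7, the minimum number of dependent arcs over all acyclic orientations of the square of the cycle C_n is strictly greater than ⌈n/2⌉. -/

import Mathlib

open SimpleGraph

variable {V : Type*}

/-- An orientation of a simple graph: each edge gets exactly one direction. -/
structure GraphOrientation {V : Type*} (G : SimpleGraph V) where
  rel : V → V → Prop
  sub : ∀ ⦃u v⦄, rel u v → G.Adj u v
  cover : ∀ ⦃u v⦄, G.Adj u v → rel u v ∨ rel v u
  asymm : ∀ ⦃u v⦄, rel u v → ¬ rel v u

/-- An orientation is acyclic if it has no directed cycle. -/
def GraphOrientation.Acyclic {G : SimpleGraph V} (D : GraphOrientation G) : Prop :=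
  ∀ v, ¬ Relation.TransGen D.rel v v

/-- An arc `u → v` of an acyclic orientation is dependent iff its reversal creates a
directed cycle, equivalently there is another directed path from `u` to `v`. -/
def GraphOrientation.Dep {G : SimpleGraph V} (D : GraphOrientation G) (u v : V) : Prop :=
  D.rel u v ∧ Relation.TransGen (fun a b => D.rel a b ∧ ¬(a = u ∧ b = v)) u v

/-- The set of dependent arcs of an orientation. -/
def GraphOrientation.depArcs {G : SimpleGraph V} (D : GraphOrientation G) : Set (V × V) :=
  {p | D.Dep p.1 p.2}

/-- The number of dependent arcs. -/
noncomputable def depCount {G : SimpleGraph V} (D : GraphOrientation G) : ℕ :=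
  D.depArcs.ncard

/-- Minimum number of dependent arcs over all acyclic orientations. -/
noncomputable def dmin (G : SimpleGraph V) : ℕ :=
  sInf {k | ∃ D : GraphOrientation G, D.Acyclic ∧ depCount D = k}

/-- Maximum number of dependent arcs over all acyclic orientations. -/
noncomputable def dmax (G : SimpleGraph V) : ℕ :=
  sSup {k | ∃ D : GraphOrientation G, D.Acyclic ∧ depCount D = k}

/-- Minimum number of edges whose deletion makes `G` triangle-free. -/
noncomputable def piT (G : SimpleGraph V) : ℕ :=
  sInf {k | ∃ S : Set (Sym2 V), S ⊆ G.edgeSet ∧ S.ncard = k ∧ (G.deleteEdges S).CliqueFree 3}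

/-- The square of the cycle `C_n` on vertices `ZMod n`. -/
def cycleSq (n : ℕ) : SimpleGraph (ZMod n) where
  Adj u v := u ≠ v ∧ (u - v = 1 ∨ v - u = 1 ∨ u - v = 2 ∨ v - u = 2)
  symm := ⟨fun u v h => ⟨h.1.symm, by tauto⟩⟩
  loopless := ⟨fun u h => h.1 rfl⟩

/-!
An acyclic orientation `D` orients every triangle `{i, i+1, i+2}` of `C_n²` transitively, and the
triangle's long arc `t i` (source → sink) is dependent. Two triangles share an arc only when they
are consecutive, and never three in a row, so the long arcs give at least `n - r` dependent arcs,
where the `r` indices with `t i = t (i+1)` contain no two consecutive ones. If `D` had at most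
`⌈n/2⌉` dependent arcs, then `r = ⌊n/2⌋` and these indices contain a progression
`m, m+2, …, m + 2(⌊n/2⌋ - 1)`. Up to reversing `D`, the arc shared at `m` is `m+1 → m+2`, and this
propagates along the progression, each shared arc `i+1 → i+2` coming with an arc `i+1 → i+3`.
For even `n` these arcs close up into a directed cycle; for odd `n` they form a path from `m+1` to
`m`, so the arc `m+1 → m` is dependent without being a long arc: one dependent arc too many.
-/

namespace GraphOrientation

variable {G : SimpleGraph V} (D : GraphOrientation G)

lemma ne_of_rel {a b : V} (h : D.rel a b) : a ≠ b := by
  rintro rfl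
  exact D.asymm h h

def reverse : GraphOrientation G where
  rel u v := D.rel v u
  sub _ _ h := (D.sub h).symm
  cover _ _ h := (D.cover h).symm
  asymm _ _ h h' := D.asymm h' h

variable {D}

lemma Acyclic.reverse (hD : D.Acyclic) : D.reverse.Acyclic :=
  fun v hv => hD v hv.swap

lemma dep_reverse_iff {u v : V} : D.reverse.Dep u v ↔ D.Dep v u := by
  refine and_congr Iff.rfl ⟨fun h => ?_, fun h => ?_⟩ <;>
    exact Relation.TransGen.mono (fun a b hab => ⟨hab.1, fun hc => hab.2 ⟨hc.2, hc.1⟩⟩) _ _ h.swap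

lemma depCount_reverse : depCount D.reverse = depCount D := by
  have : D.reverse.depArcs = Prod.swap '' D.depArcs := by
    rw [Set.image_swap_eq_preimage_swap]
    exact Set.ext fun _ => dep_reverse_iff
  rw [depCount, depCount, this, Set.ncard_image_of_injective _ Prod.swap_injective]

lemma card_le_depCount [Finite V] {s : Finset (V × V)} (hs : ↑s ⊆ D.depArcs) :
    s.card ≤ depCount D := by
  rw [← Set.ncard_coe_finset]
  exact Set.ncard_le_ncard hs

variable (D)

def IsSource (S : Set V) (a : V) : Prop := a ∈ S ∧ ∀ x ∈ S, x ≠ a → D.rel a x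

def IsSink (S : Set V) (b : V) : Prop := b ∈ S ∧ ∀ x ∈ S, x ≠ b → D.rel x b

def IsLongArc (S : Set V) (p : V × V) : Prop := D.IsSource S p.1 ∧ D.IsSink S p.2

variable {D}

lemma isLongArc_reverse_iff {S : Set V} {p : V × V} :
    D.reverse.IsLongArc S p.swap ↔ D.IsLongArc S p :=
  and_comm

lemma Acyclic.exists_isSource [Finite V] (hD : D.Acyclic) {S : Set V} (hS : G.IsClique S)
    (hne : S.Nonempty) : ∃ a, D.IsSource S a := by
  have : IsTrans V (Relation.TransGen D.rel) := ⟨fun _ _ _ => Relation.TransGen.trans⟩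
  have : Std.Irrefl (Relation.TransGen D.rel) := ⟨hD⟩
  obtain ⟨a, ha, hmin⟩ :=
    (Finite.wellFounded_of_trans_of_irrefl (Relation.TransGen D.rel)).has_min S hne
  refine ⟨a, ha, fun x hx hxa => (D.cover (hS ha hx hxa.symm)).resolve_right fun h => ?_⟩
  exact hmin x hx (.single h)

lemma Acyclic.exists_isLongArc [Finite V] (hD : D.Acyclic) {S : Set V} (hS : G.IsClique S)
    (hne : S.Nonempty) : ∃ p, D.IsLongArc S p := by
  obtain ⟨a, ha⟩ := hD.exists_isSource hS hne
  obtain ⟨b, hb⟩ := hD.reverse.exists_isSource hS hne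
  exact ⟨(a, b), ha, hb⟩

lemma IsLongArc.mem_depArcs {S : Set V} {p : V × V} (h : D.IsLongArc S p) (hS : 2 < S.ncard) :
    p ∈ D.depArcs := by
  have hpair : ({p.1, p.2} : Set V).ncard < S.ncard :=
    (Set.ncard_insert_le _ _).trans_lt (by rwa [Set.ncard_singleton])
  obtain ⟨m, hm, hmp⟩ := Set.exists_mem_notMem_of_ncard_lt_ncard hpair
  simp only [Set.mem_insert_iff, Set.mem_singleton_iff, not_or] at hmp
  have h1 : D.rel p.1 m := h.1.2 m hm hmp.1
  have h2 : D.rel m p.2 := h.2.2 m hm hmp.2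
  have hp : p.2 ≠ p.1 := fun he => D.asymm h1 (he ▸ h2)
  exact ⟨h.1.2 p.2 h.2.1 hp, .head ⟨h1, fun hc => hmp.2 hc.2⟩ (.single ⟨h2, fun hc => hmp.1 hc.1⟩)⟩

def ofInjective {α : Type*} [LinearOrder α] (G : SimpleGraph V) (f : V → α)
    (hf : Function.Injective f) : GraphOrientation G where
  rel u v := G.Adj u v ∧ f u < f v
  sub _ _ h := h.1
  cover _ _ h := (lt_or_gt_of_ne (hf.ne h.ne)).imp (⟨h, ·⟩) (⟨h.symm, ·⟩)
  asymm _ _ h h' := lt_asymm h.2 h'.2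

lemma acyclic_ofInjective {α : Type*} [LinearOrder α] (f : V → α) (hf : Function.Injective f) :
    (ofInjective G f hf).Acyclic := by
  intro v hv
  have key : ∀ a b, Relation.TransGen (ofInjective G f hf).rel a b → f a < f b := by
    intro a b h
    induction h with
    | single h => exact h.2
    | tail _ h ih => exact ih.trans h.2
  exact lt_irrefl _ (key v v hv)

end GraphOrientation

lemma lt_dmin {G : SimpleGraph V} {k : ℕ} (hG : ∃ D : GraphOrientation G, D.Acyclic)
    (h : ∀ D : GraphOrientation G, D.Acyclic → k < depCount D) : k < dmin G := by
  obtain ⟨D, hD⟩ := hG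
  obtain ⟨D', hD', hk⟩ := Nat.sInf_mem
    (s := {k | ∃ D : GraphOrientation G, D.Acyclic ∧ depCount D = k}) ⟨_, D, hD, rfl⟩
  exact (h D' hD').trans_eq hk

namespace ZMod

variable {n : ℕ}

lemma natCast_inj_of_lt {a b : ℕ} (ha : a < n) (hb : b < n) : (a : ZMod n) = b ↔ a = b := by
  rw [natCast_eq_natCast_iff', Nat.mod_eq_of_lt ha, Nat.mod_eq_of_lt hb]

lemma natCast_ne_zero_of_lt {k : ℕ} (h0 : 0 < k) (hk : k < n) : (k : ZMod n) ≠ 0 := by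
  simpa using (natCast_inj_of_lt hk (h0.trans hk)).not.2 h0.ne'

lemma ne_of_sub_eq_natCast {x y : ZMod n} {k : ℕ} (h0 : 0 < k) (hk : k < n) (h : x - y = k) :
    x ≠ y := by
  rintro rfl
  exact natCast_ne_zero_of_lt h0 hk (by rw [← h, sub_self])

variable {S : Finset (ZMod n)}

lemma card_union_image_add_one (hS : ∀ m ∈ S, m + 1 ∉ S) :
    (S ∪ S.image (· + 1)).card = 2 * S.card := by
  rw [Finset.card_union_of_disjoint, Finset.card_image_of_injective _ (add_left_injective 1),
    two_mul]
  rw [Finset.disjoint_left]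
  intro a ha ha'
  obtain ⟨b, hb, rfl⟩ := Finset.mem_image.1 ha'
  exact hS b hb ha

variable [NeZero n]

lemma two_mul_card_le_of_add_one_notMem (hS : ∀ m ∈ S, m + 1 ∉ S) : 2 * S.card ≤ n := by
  rw [← card_union_image_add_one hS]
  exact (Finset.card_le_univ _).trans_eq (ZMod.card n)

lemma exists_add_two_mul_mem_of_add_one_notMem (hn : 2 ≤ n) (hS : ∀ m ∈ S, m + 1 ∉ S)
    (hcard : n / 2 ≤ S.card) : ∃ m, ∀ j < n / 2, m + 2 * (j : ZMod n) ∈ S := by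
  classical
  set C := (S ∪ S.image (· + 1))ᶜ
  have hCcard : C.card ≤ 1 := by
    rw [Finset.card_compl, card_union_image_add_one hS, ZMod.card]
    omega
  have hC : ∀ x, x ∉ C ↔ x ∈ S ∨ x - 1 ∈ S := by
    intro x
    simp only [C, Finset.mem_compl, not_not, Finset.mem_union, Finset.mem_image]
    exact or_congr Iff.rfl ⟨fun ⟨b, hb, hbx⟩ => by rwa [← hbx, add_sub_cancel_right],
      fun h => ⟨x - 1, h, sub_add_cancel x 1⟩⟩
  have step : ∀ a ∈ S, a + 2 ∉ C → a + 2 ∈ S := by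
    intro a ha h
    refine ((hC _).1 h).resolve_right fun h' => hS a ha ?_
    rwa [show a + 2 - 1 = a + 1 by ring] at h'
  obtain ⟨m, hmS, hmC⟩ : ∃ m ∈ S, ∀ x ∈ C, x + 1 = m := by
    rcases C.eq_empty_or_nonempty with hC0 | ⟨u, hu⟩
    · obtain ⟨m, hm⟩ := Finset.card_pos.1 (show 0 < S.card by omega)
      exact ⟨m, hm, by simp [hC0]⟩
    · have huC : ∀ x ∈ C, x = u := fun x hx => Finset.card_le_one.1 hCcard x hx u hu
      refine ⟨u + 1, ?_, fun x hx => by rw [huC x hx]⟩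
      have h1 : u + 1 ∉ C := fun h =>
        ne_of_sub_eq_natCast (k := 1) one_pos (by omega) (by push_cast; ring) (huC _ h)
      refine ((hC _).1 h1).resolve_right fun h' => ?_
      exact (hC u).2 (Or.inl (by simpa using h')) hu
  refine ⟨m, fun j => ?_⟩
  induction j with
  | zero => intro _; simpa using hmS
  | succ j ih =>
    intro hj
    have hnext := step _ (ih (by omega)) fun h => natCast_ne_zero_of_lt (n := n) (k := 2 * j + 3)
      (by omega) (by omega) (by push_cast; linear_combination hmC _ h)
    rwa [show m + 2 * (j : ZMod n) + 2 = m + 2 * ((j + 1 : ℕ) : ZMod n) by push_cast; ring]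
      at hnext

end ZMod

namespace cycleSq

variable {n : ℕ}

def triangle (i : ZMod n) : Set (ZMod n) := {i, i + 1, i + 2}

lemma mem_triangle {i x : ZMod n} : x ∈ triangle i ↔ x = i ∨ x = i + 1 ∨ x = i + 2 := Iff.rfl

lemma self_mem_triangle (i : ZMod n) : i ∈ triangle i := Or.inl rfl

lemma isClique_triangle (i : ZMod n) : (cycleSq n).IsClique (triangle i) := by
  intro x hx y hy hxy
  refine ⟨hxy, ?_⟩
  rcases hx with rfl | rfl | rfl <;> rcases hy with rfl | rfl | rfl <;>
    first | exact absurd rfl hxy | (ring_nf; simp)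

lemma ncard_triangle (hn : 3 ≤ n) (i : ZMod n) : (triangle i).ncard = 3 := by
  refine Set.ncard_eq_three.2 ⟨i, i + 1, i + 2, ?_, ?_, ?_, rfl⟩
  · exact (ZMod.ne_of_sub_eq_natCast (k := 1) (by norm_num) (by omega) (by push_cast; ring)).symm
  · exact (ZMod.ne_of_sub_eq_natCast (k := 2) (by norm_num) (by omega) (by push_cast; ring)).symm
  · exact (ZMod.ne_of_sub_eq_natCast (k := 1) (by norm_num) (by omega) (by push_cast; ring)).symm

lemma exists_lt_three_of_mem_triangle {i x : ZMod n} (h : x ∈ triangle i) :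
    ∃ a < 3, x = i + (a : ℕ) := by
  rcases h with rfl | rfl | rfl
  exacts [⟨0, by norm_num, by simp⟩, ⟨1, by norm_num, by simp⟩, ⟨2, by norm_num, by simp⟩]

lemma eq_of_mem_triangle_of_mem_triangle (hn : 5 ≤ n) {i j x y : ZMod n}
    (hxi : x ∈ triangle i) (hxj : x ∈ triangle j) (hyi : y ∈ triangle i) (hyj : y ∈ triangle j)
    (hxy : x ≠ y) : j = i ∨ j = i + 1 ∨ i = j + 1 := by
  obtain ⟨a, ha, rfl⟩ := exists_lt_three_of_mem_triangle hxi
  obtain ⟨a', ha', hxa'⟩ := exists_lt_three_of_mem_triangle hxj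
  obtain ⟨b, hb, rfl⟩ := exists_lt_three_of_mem_triangle hyi
  obtain ⟨b', hb', hyb'⟩ := exists_lt_three_of_mem_triangle hyj
  have hab : a ≠ b := by rintro rfl; exact hxy rfl
  -- both `a - a'` and `b - b'` represent `j - i`, and they are small enough to compare in `ℕ`
  have key : a + b' = b + a' := (ZMod.natCast_inj_of_lt (n := n) (by omega) (by omega)).1 (by
    push_cast
    linear_combination hxa' - hyb')
  rcases (show a = a' ∨ a = a' + 1 ∨ a' = a + 1 by omega) with h | h | h <;> subst h
  · left; linear_combination -hxa'
  · right; left; push_cast at hxa'; linear_combination -hxa'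
  · right; right; push_cast at hxa'; linear_combination hxa'

lemma mem_triangle_inter_succ (hn : 4 ≤ n) {i x : ZMod n} (h : x ∈ triangle i)
    (h' : x ∈ triangle (i + 1)) : x = i + 1 ∨ x = i + 2 := by
  obtain ⟨a, ha, rfl⟩ := exists_lt_three_of_mem_triangle h
  obtain ⟨b, hb, hab⟩ := exists_lt_three_of_mem_triangle h'
  have key : a = b + 1 := (ZMod.natCast_inj_of_lt (n := n) (by omega) (by omega)).1 (by
    push_cast
    linear_combination hab)
  rcases (show b = 0 ∨ b = 1 by omega) with rfl | rfl <;> subst key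
  · left; simp
  · right; push_cast; ring

variable {D : GraphOrientation (cycleSq n)} {t : ZMod n → ZMod n × ZMod n}

def IsLongArcMap (D : GraphOrientation (cycleSq n)) (t : ZMod n → ZMod n × ZMod n) : Prop :=
  ∀ i, D.IsLongArc (triangle i) (t i)

lemma _root_.GraphOrientation.Acyclic.exists_isLongArcMap [NeZero n] (hD : D.Acyclic) :
    ∃ t, IsLongArcMap D t := by
  choose t ht using fun i => hD.exists_isLongArc (isClique_triangle i) ⟨i, self_mem_triangle i⟩
  exact ⟨t, ht⟩

def repeats [NeZero n] (t : ZMod n → ZMod n × ZMod n) : Finset (ZMod n) :=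
  Finset.univ.filter fun i => t i = t (i + 1)

lemma mem_repeats [NeZero n] {i : ZMod n} : i ∈ repeats t ↔ t i = t (i + 1) := by
  simp [repeats]

lemma repeats_swap [NeZero n] : repeats (Prod.swap ∘ t) = repeats t := by
  ext i
  simp [mem_repeats]

namespace IsLongArcMap

lemma reverse (ht : IsLongArcMap D t) : IsLongArcMap D.reverse (Prod.swap ∘ t) :=
  fun i => GraphOrientation.isLongArc_reverse_iff.2 (ht i)

lemma mem_depArcs (hn : 3 ≤ n) (ht : IsLongArcMap D t) (i : ZMod n) : t i ∈ D.depArcs :=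
  (ht i).mem_depArcs (by rw [ncard_triangle hn]; norm_num)

lemma rel (hn : 3 ≤ n) (ht : IsLongArcMap D t) (i : ZMod n) : D.rel (t i).1 (t i).2 :=
  (ht.mem_depArcs hn i).1

lemma eq_of_apply_eq (hn : 5 ≤ n) (ht : IsLongArcMap D t) {i j : ZMod n} (h : t i = t j) :
    j = i ∨ j = i + 1 ∨ i = j + 1 :=
  eq_of_mem_triangle_of_mem_triangle hn (ht i).1.1 (h ▸ (ht j).1.1) (ht i).2.1 (h ▸ (ht j).2.1)
    (D.ne_of_rel (ht.rel (by omega) i))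

lemma apply_eq_of_apply_eq_succ (hn : 4 ≤ n) (ht : IsLongArcMap D t) {i : ZMod n}
    (h : t i = t (i + 1)) : t i = (i + 1, i + 2) ∨ t i = (i + 2, i + 1) := by
  have hne := D.ne_of_rel (ht.rel (by omega) i)
  rcases mem_triangle_inter_succ hn (ht i).1.1 (h ▸ (ht (i + 1)).1.1) with h1 | h1 <;>
    rcases mem_triangle_inter_succ hn (ht i).2.1 (h ▸ (ht (i + 1)).2.1) with h2 | h2
  · exact absurd (h1.trans h2.symm) hne
  · exact Or.inl (Prod.ext h1 h2)
  · exact Or.inr (Prod.ext h1 h2)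
  · exact absurd (h1.trans h2.symm) hne

lemma add_one_notMem_repeats [NeZero n] (hn : 5 ≤ n) (ht : IsLongArcMap D t) :
    ∀ i ∈ repeats t, i + 1 ∉ repeats t := by
  intro i hi hi'
  rw [mem_repeats] at hi hi'
  rcases ht.eq_of_apply_eq hn (hi.trans hi') with hc | hc | hc
  · exact ZMod.ne_of_sub_eq_natCast (k := 2) (by norm_num) (by omega) (by push_cast; ring) hc
  · exact ZMod.ne_of_sub_eq_natCast (k := 1) (by norm_num) (by omega) (by push_cast; ring) hc
  · exact ZMod.ne_of_sub_eq_natCast (k := 3) (by norm_num) (by omega) (by push_cast; ring)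
      hc.symm

lemma le_card_image_add_card_repeats [NeZero n] (hn : 5 ≤ n) (ht : IsLongArcMap D t) :
    n ≤ (Finset.univ.image t).card + (repeats t).card := by
  -- `i ↦ t (i + 1)` is injective off `repeats t`
  have hinj : Set.InjOn (fun i => t (i + 1)) ↑(Finset.univ.filter fun i => ¬t i = t (i + 1)) := by
    intro i hi j hj hij
    simp only [Finset.coe_filter, Finset.mem_univ, true_and, Set.mem_ofPred_eq] at hi hj hij
    rcases ht.eq_of_apply_eq hn hij with h | h | h
    · exact add_right_cancel h.symm
    · obtain rfl := add_right_cancel h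
      exact (hj hij).elim
    · obtain rfl := add_right_cancel h
      exact (hi hij.symm).elim
  have himage := Finset.card_le_card_of_injOn _
    (fun i _ => Finset.mem_image_of_mem t (Finset.mem_univ (i + 1))) hinj
  have hsplit := Finset.card_filter_add_card_filter_not (s := Finset.univ)
    (fun i => t i = t (i + 1))
  rw [Finset.card_univ, ZMod.card] at hsplit
  rw [repeats]
  omega

lemma rel_of_forward (hn : 4 ≤ n) (ht : IsLongArcMap D t) {i : ZMod n}
    (h : t i = (i + 1, i + 2)) (h' : t (i + 1) = (i + 1, i + 2)) :
    D.rel (i + 1) i ∧ D.rel (i + 1) (i + 3) ∧ D.rel (i + 3) (i + 2) := by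
  have hsrc := (ht i).1
  have hsrc' := (ht (i + 1)).1
  have hsnk' := (ht (i + 1)).2
  rw [h] at hsrc
  rw [h'] at hsrc' hsnk'
  have h3 : i + 3 ∈ triangle (i + 1) := mem_triangle.2 (Or.inr (Or.inr (by ring)))
  refine ⟨hsrc.2 i (self_mem_triangle i) ?_, hsrc'.2 _ h3 ?_, hsnk'.2 _ h3 ?_⟩
  · exact (ZMod.ne_of_sub_eq_natCast (k := 1) (by norm_num) (by omega) (by push_cast; ring)).symm
  · exact ZMod.ne_of_sub_eq_natCast (k := 2) (by norm_num) (by omega) (by push_cast; ring)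
  · exact ZMod.ne_of_sub_eq_natCast (k := 1) (by norm_num) (by omega) (by push_cast; ring)

lemma apply_add_two_of_forward (hn : 5 ≤ n) (ht : IsLongArcMap D t) {i : ZMod n}
    (h : t i = (i + 1, i + 2)) (h' : t (i + 1) = (i + 1, i + 2)) (h2 : t (i + 2) = t (i + 3)) :
    t (i + 2) = (i + 3, i + 4) := by
  rw [show i + 3 = i + 2 + 1 by ring] at h2
  rcases ht.apply_eq_of_apply_eq_succ (by omega) h2 with hfwd | hbwd
  · rw [hfwd]
    ext <;> ring
  · -- `i + 3` would be the sink of the triangle at `i + 2`, but `i + 3 → i + 2`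
    have hsnk := (ht (i + 2)).2
    rw [hbwd, show i + 2 + 1 = i + 3 by ring] at hsnk
    refine (D.asymm (ht.rel_of_forward (by omega) h h').2.2
      (hsnk.2 (i + 2) (self_mem_triangle _) ?_)).elim
    exact (ZMod.ne_of_sub_eq_natCast (k := 1) (by norm_num) (by omega) (by push_cast; ring)).symm

lemma forward_chain (hn : 5 ≤ n) (ht : IsLongArcMap D t) {m : ZMod n}
    (hm : t m = (m + 1, m + 2)) (k : ℕ) (hk : ∀ j ≤ k, t (m + 2 * j) = t (m + 2 * j + 1)) :
    t (m + 2 * k) = (m + 2 * k + 1, m + 2 * k + 2) ∧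
      Relation.TransGen (fun a b => D.rel a b ∧ b = a + 2) (m + 1) (m + 2 * k + 3) := by
  induction k with
  | zero =>
    simp only [Nat.cast_zero, mul_zero, add_zero]
    have hm' : t (m + 1) = (m + 1, m + 2) := by simpa [hm] using (hk 0 le_rfl).symm
    exact ⟨hm, .single ⟨(ht.rel_of_forward (by omega) hm hm').2.1, by ring⟩⟩
  | succ k ih =>
    obtain ⟨hfwd, hpath⟩ := ih fun j hj => hk j (by omega)
    have hi := hk k (by omega)
    have hi2 := hk (k + 1) le_rfl
    rw [show m + 2 * ((k + 1 : ℕ) : ZMod n) = m + 2 * k + 2 by push_cast; ring] at hi2 ⊢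
    generalize m + 2 * (k : ZMod n) = i at hfwd hpath hi hi2 ⊢
    rw [add_assoc i 2 1, show (2 + 1 : ZMod n) = 3 by norm_num] at hi2
    have hnext := ht.apply_add_two_of_forward hn hfwd (hi.symm.trans hfwd) hi2
    have hrel := (ht.rel_of_forward (i := i + 2) (by omega) (by rw [hnext]; ext <;> ring)
      (by rw [show i + 2 + 1 = i + 3 by ring, ← hi2, hnext]; ext <;> ring)).2.1
    rw [show i + 2 + 1 = i + 3 by ring] at hrel
    exact ⟨by rw [hnext]; ext <;> ring, hpath.tail ⟨hrel, by ring⟩⟩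

lemma not_acyclic_of_forward [NeZero n] (hn : 5 ≤ n) (he : Even n) (ht : IsLongArcMap D t)
    {m : ZMod n} (hm : t m = (m + 1, m + 2))
    (hchain : ∀ j < n / 2, m + 2 * (j : ZMod n) ∈ repeats t) : ¬D.Acyclic := by
  obtain ⟨-, hpath⟩ :=
    ht.forward_chain hn hm (n / 2 - 1) fun j hj => mem_repeats.1 (hchain j (by omega))
  have hend : m + 2 * ((n / 2 - 1 : ℕ) : ZMod n) + 3 = m + 1 := by
    have := congrArg (Nat.cast : ℕ → ZMod n) (show 2 * (n / 2 - 1) + 3 = n + 1 by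
      rw [Nat.even_iff] at he; omega)
    push_cast [ZMod.natCast_self] at this
    linear_combination this
  rw [hend] at hpath
  exact fun hD => hD _ (Relation.TransGen.mono (fun _ _ h => h.1) _ _ hpath)

lemma notMem_range_of_rel (hn : 5 ≤ n) (ht : IsLongArcMap D t) {m : ZMod n}
    (hm : t m = (m + 1, m + 2)) (hm1 : t (m + 1) = (m + 1, m + 2)) (hrel : D.rel m (m - 1)) :
    (m + 1, m) ∉ Set.range t := by
  rintro ⟨i, hi⟩
  have hsrc := (ht i).1.1
  have hsnk := (ht i).2
  rw [hi] at hsrc hsnk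
  have hm2 : m ≠ m + 2 :=
    (ZMod.ne_of_sub_eq_natCast (k := 2) (by norm_num) (by omega) (by push_cast; ring)).symm
  rcases eq_of_mem_triangle_of_mem_triangle hn hsrc (mem_triangle.2 (Or.inr (Or.inl rfl)))
    hsnk.1 (self_mem_triangle m)
    (ZMod.ne_of_sub_eq_natCast (k := 1) (by norm_num) (by omega) (by push_cast; ring))
    with h | h | h
  · rw [← h] at hi
    exact hm2 (congrArg Prod.snd (hi.symm.trans hm))
  · -- `m` would be the sink of the triangle at `m - 1`, against `m → m - 1`
    obtain rfl : i = m - 1 := by linear_combination -h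
    have hne : m - 1 ≠ m := (ZMod.ne_of_sub_eq_natCast (k := 1) (by norm_num) (by omega)
      (by push_cast; ring)).symm
    exact D.asymm hrel (hsnk.2 _ (self_mem_triangle _) hne)
  · rw [h] at hi
    exact hm2 (congrArg Prod.snd (hi.symm.trans hm1))

lemma exists_mem_depArcs_notMem_range_of_forward [NeZero n] (hn : 5 ≤ n) (ho : Odd n)
    (ht : IsLongArcMap D t) {m : ZMod n} (hm : t m = (m + 1, m + 2))
    (hchain : ∀ j < n / 2, m + 2 * (j : ZMod n) ∈ repeats t) :
    ∃ e ∈ D.depArcs, e ∉ Set.range t := by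
  set k := n / 2 - 1
  obtain ⟨hlast, hpath⟩ :=
    ht.forward_chain hn hm k fun j hj => mem_repeats.1 (hchain j (by omega))
  have hend : m + 2 * (k : ZMod n) + 3 = m := by
    have := congrArg (Nat.cast : ℕ → ZMod n) (show 2 * k + 3 = n by
      rw [Nat.odd_iff] at ho; omega)
    push_cast [ZMod.natCast_self] at this
    linear_combination this
  rw [hend] at hpath
  have hm1 : t (m + 1) = (m + 1, m + 2) :=
    (mem_repeats.1 (by simpa using hchain 0 (by omega))).symm.trans hm
  have hrel := (ht.rel_of_forward (by omega) hlast
    ((mem_repeats.1 (hchain k (by omega))).symm.trans hlast)).2.2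
  rw [hend, show m + 2 * (k : ZMod n) + 2 = m - 1 by linear_combination hend] at hrel
  refine ⟨(m + 1, m), ⟨(ht.rel_of_forward (by omega) hm hm1).1, ?_⟩,
    ht.notMem_range_of_rel hn hm hm1 hrel⟩
  refine Relation.TransGen.mono ?_ _ _ hpath
  rintro a b ⟨hab, rfl⟩
  refine ⟨hab, fun ⟨ha, hb⟩ => ?_⟩
  exact ZMod.natCast_ne_zero_of_lt (n := n) (k := 3) (by norm_num) (by omega)
    (by push_cast; linear_combination hb - ha)

lemma lt_depCount_of_forward [NeZero n] (hn : 5 ≤ n) (hD : D.Acyclic) (ht : IsLongArcMap D t)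
    {m : ZMod n} (hm : t m = (m + 1, m + 2))
    (hchain : ∀ j < n / 2, m + 2 * (j : ZMod n) ∈ repeats t) :
    (n + 1) / 2 < depCount D := by
  rcases Nat.even_or_odd n with he | ho
  · exact (ht.not_acyclic_of_forward hn he hm hchain hD).elim
  obtain ⟨e, he, he'⟩ := ht.exists_mem_depArcs_notMem_range_of_forward hn ho hm hchain
  have hsub : ↑(insert e (Finset.univ.image t)) ⊆ D.depArcs := by
    rw [Finset.coe_insert, Finset.coe_image, Finset.coe_univ, Set.image_univ]
    exact Set.insert_subset he (Set.range_subset_iff.2 (ht.mem_depArcs (by omega)))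
  have hcount := D.card_le_depCount hsub
  rw [Finset.card_insert_of_notMem (by simpa using he')] at hcount
  have h1 := ht.le_card_image_add_card_repeats hn
  have h2 := ZMod.two_mul_card_le_of_add_one_notMem (ht.add_one_notMem_repeats hn)
  rw [Nat.odd_iff] at ho
  omega

end IsLongArcMap

lemma lt_depCount (hn : 5 ≤ n) (hD : D.Acyclic) : (n + 1) / 2 < depCount D := by
  have : NeZero n := ⟨by omega⟩
  obtain ⟨t, ht⟩ := hD.exists_isLongArcMap
  by_contra! hle
  have hcard : n / 2 ≤ (repeats t).card := by
    have h1 := ht.le_card_image_add_card_repeats hn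
    have h2 := D.card_le_depCount (s := Finset.univ.image t) (by
      simpa [Set.range_subset_iff] using ht.mem_depArcs (by omega))
    omega
  obtain ⟨m, hm⟩ := ZMod.exists_add_two_mul_mem_of_add_one_notMem (by omega)
    (ht.add_one_notMem_repeats hn) hcard
  have hm0 : t m = t (m + 1) := mem_repeats.1 (by simpa using hm 0 (by omega))
  rcases ht.apply_eq_of_apply_eq_succ (by omega) hm0 with hfwd | hbwd
  · exact hle.not_gt (ht.lt_depCount_of_forward hn hD hfwd hm)
  · rw [← GraphOrientation.depCount_reverse] at hle
    refine hle.not_gt (ht.reverse.lt_depCount_of_forward hn hD.reverse (m := m) ?_ ?_)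
    · simp [hbwd]
    · simpa [repeats_swap] using hm

end cycleSq

/-- For `n ≥ 7`, `d_min(C_n^2) > ⌈n/2⌉`. -/
theorem stmt8 (n : ℕ) (hn : 7 ≤ n) :
    (n + 1) / 2 < dmin (cycleSq n) := by
  have : NeZero n := ⟨by omega⟩
  exact lt_dmin ⟨_, GraphOrientation.acyclic_ofInjective _ (ZMod.val_injective n)⟩
    fun _ hD => cycleSq.lt_depCount (by omega) hD
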